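/- Let E, Ψ : [0,∞) → ℝ be differentiable functions, ε > 0, and define E_ε(t) = E(t) + εΨ(t). Suppose (i) Ψ'(t) ≤ -E(t) + L for all t > 0 and E'(t) ≤ 0 for all t > 0, so that E_ε'(t) ≤ -εE(t) + εL, and (ii) |E_ε(t) - E(t)| ≤ εC₁(E(t) + D) for all t ≥ 0, with ε ≤ 1/(2C₁) where C₁, D, L ≥ 0. Then -D/2 + E(t)/2 ≤ E_ε(t) ≤ (3/2)E(t) + D/2 for all t ≥ 0, and consequently E(t) ≤ 3E(0)e^{-(2ε/3)t} + C for all t > 0, for a constant C depending only on L and D. -/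
import Mathlib


/-- The perturbed-energy argument: if `Ψ' ≤ -E + L`, `E' ≤ 0` and the perturbation
`E_ε = E + εΨ` is comparable to `E`, then `E_ε` is sandwiched between affine functions of
`E` and `E` decays exponentially to a constant depending only on `L` and `D`. -/
theorem perturbed_energy_decay (L D : ℝ) (hL : 0 ≤ L) (hD : 0 ≤ D) :
    ∃ C : ℝ, ∀ (C₁ ε : ℝ) (E Ψ : ℝ → ℝ),
      0 ≤ C₁ → 0 < ε → ε ≤ 1 / (2 * C₁) →
      Differentiable ℝ E → Differentiable ℝ Ψ →
      (∀ t > (0:ℝ), deriv Ψ t ≤ -E t + L) →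
      (∀ t > (0:ℝ), deriv E t ≤ 0) →
      (∀ t ≥ (0:ℝ), |(E t + ε * Ψ t) - E t| ≤ ε * C₁ * (E t + D)) →
      ((∀ t ≥ (0:ℝ),
          -D / 2 + E t / 2 ≤ E t + ε * Ψ t ∧ E t + ε * Ψ t ≤ (3/2) * E t + D / 2) ∧
        ∀ t > (0:ℝ), E t ≤ 3 * E 0 * Real.exp (-(2 * ε / 3) * t) + C) := by
  use 2 * D + 3 * L
  intro C₁ ε E Ψ hC₁ hε hεC₁ hEd hΨd hΨ' hE' hcomp
  have hC₁pos : 0 < C₁ := by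
    rcases hC₁.lt_or_eq with h | h
    · exact h
    · exfalso; rw [← h] at hεC₁; norm_num at hεC₁; linarith
  have hεC : ε * C₁ ≤ 1 / 2 := by
    rw [le_div_iff₀ (by positivity)] at hεC₁
    nlinarith
  have hED : ∀ t ≥ (0:ℝ), 0 ≤ E t + D := by
    intro t ht
    have h1 := hcomp t ht
    have h2 := abs_nonneg ((E t + ε * Ψ t) - E t)
    nlinarith [mul_pos hε hC₁pos]
  have habs : ∀ t ≥ (0:ℝ), |ε * Ψ t| ≤ (E t + D) / 2 := by
    intro t ht
    have h1 := hcomp t ht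
    have h2 := hED t ht
    have h3 : ε * C₁ * (E t + D) ≤ (E t + D) / 2 := by nlinarith
    calc |ε * Ψ t| = |(E t + ε * Ψ t) - E t| := by ring_nf
      _ ≤ ε * C₁ * (E t + D) := h1
      _ ≤ (E t + D) / 2 := h3
  have sandwich : ∀ t ≥ (0:ℝ),
      -D / 2 + E t / 2 ≤ E t + ε * Ψ t ∧ E t + ε * Ψ t ≤ (3/2) * E t + D / 2 := by
    intro t ht
    have h1 := abs_le.mp (habs t ht)
    constructor <;> [linarith [h1.1]; linarith [h1.2]]
  refine ⟨sandwich, ?_⟩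
  set lam : ℝ := 2 * ε / 3 with hlam
  have hlampos : 0 < lam := by positivity
  set K : ℝ := D / 2 + 3 * L / 2 with hK
  set G : ℝ → ℝ := fun t => (E t + ε * Ψ t - K) * Real.exp (lam * t) with hG
  have hGderiv : ∀ t, HasDerivAt G
      ((deriv E t + ε * deriv Ψ t) * Real.exp (lam * t)
        + (E t + ε * Ψ t - K) * (Real.exp (lam * t) * (lam * 1))) t := by
    intro t
    exact (((hEd t).hasDerivAt.add (((hΨd t).hasDerivAt).const_mul ε)).sub_const K).mul
      (((hasDerivAt_id t).const_mul lam).exp)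
  have hGdiff : Differentiable ℝ G := fun t => (hGderiv t).differentiableAt
  have hanti : AntitoneOn G (Set.Ici 0) := by
    apply antitoneOn_of_deriv_nonpos (convex_Ici 0) hGdiff.continuous.continuousOn
      hGdiff.differentiableOn
    intro t ht
    rw [interior_Ici] at ht
    have htpos : (0:ℝ) < t := ht
    rw [(hGderiv t).deriv]
    have hX : 0 < Real.exp (lam * t) := Real.exp_pos _
    have h1 := hE' t htpos
    have h2 := hΨ' t htpos
    have h3 : ε * deriv Ψ t ≤ ε * (-E t + L) := mul_le_mul_of_nonneg_left h2 hε.le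
    have h4 := (abs_le.mp (habs t htpos.le)).2
    have hbracket : deriv E t + ε * deriv Ψ t + (E t + ε * Ψ t - K) * (lam * 1) ≤ 0 := by
      rw [hlam, hK]
      have h5 : (2 * ε / 3) * (ε * Ψ t) ≤ (2 * ε / 3) * ((E t + D) / 2) :=
        mul_le_mul_of_nonneg_left h4 (by positivity)
      nlinarith [h1, h3, h5]
    calc (deriv E t + ε * deriv Ψ t) * Real.exp (lam * t)
          + (E t + ε * Ψ t - K) * (Real.exp (lam * t) * (lam * 1))
        = (deriv E t + ε * deriv Ψ t + (E t + ε * Ψ t - K) * (lam * 1))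
            * Real.exp (lam * t) := by ring
      _ ≤ 0 * Real.exp (lam * t) := mul_le_mul_of_nonneg_right hbracket hX.le
      _ = 0 := zero_mul _
  intro t ht
  have hGle : G t ≤ G 0 := hanti Set.self_mem_Ici (le_of_lt ht) ht.le
  have hG0 : G 0 = E 0 + ε * Ψ 0 - K := by simp [hG]
  set Y : ℝ := Real.exp (-(2 * ε / 3) * t) with hY
  have hYpos : 0 < Y := Real.exp_pos _
  have hYle : Y ≤ 1 := by
    rw [hY]
    apply Real.exp_le_one_iff.mpr
    nlinarith
  have hXY : Real.exp (lam * t) * Y = 1 := by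
    rw [hY, hlam, ← Real.exp_add]
    norm_num
  -- From G t ≤ G 0: E_ε t - K ≤ (E_ε 0 - K) * Y
  have hmain : E t + ε * Ψ t - K ≤ (E 0 + ε * Ψ 0 - K) * Y := by
    have h1 : G t * Y ≤ G 0 * Y := mul_le_mul_of_nonneg_right hGle hYpos.le
    have h2 : G t * Y = E t + ε * Ψ t - K := by
      rw [hG]
      calc (E t + ε * Ψ t - K) * Real.exp (lam * t) * Y
          = (E t + ε * Ψ t - K) * (Real.exp (lam * t) * Y) := by ring
        _ = E t + ε * Ψ t - K := by rw [hXY, mul_one]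
    rw [h2, hG0] at h1
    exact h1
  have hlow := (sandwich t ht.le).1
  have hup0 := (sandwich 0 le_rfl).2
  -- (E_ε 0 - K) * Y ≤ (3/2 * E 0 - 3/2 * L) * Y
  have h7 : (E 0 + ε * Ψ 0 - K) * Y ≤ ((3/2) * E 0 + D / 2 - K) * Y :=
    mul_le_mul_of_nonneg_right (by linarith) hYpos.le
  have h8 : ((3/2) * E 0 + D / 2 - K) * Y = (3/2) * E 0 * Y - (3/2) * L * Y := by
    rw [hK]; ring
  have h9 : 0 ≤ (3/2) * L * Y := by positivity
  -- E t ≤ 2 * (E t + ε Ψ t) + D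
  have h10 : E t ≤ 2 * (E t + ε * Ψ t) + D := by linarith
  clear_value Y K lam G
  have h11 : E t + ε * Ψ t ≤ (3/2) * E 0 * Y + K := by
    linarith [hmain, h7, h8, h9]
  calc E t ≤ 2 * ((3/2) * E 0 * Y + K) + D := by linarith
    _ = 3 * E 0 * Y + (2 * D + 3 * L) := by rw [hK]; ring
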